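/- Under monotonicity and exclusion, the instrumental variables estimand with outcomes imputed as zero for the dead equals the mean treated outcome in the LD stratum (not a causal effect on a common set of units): if 0 < P(Z = T) < 1, Z is independent of (S_T, S_C, Y_T, Y_C), Y_T and Y_C are integrable, P(DL) = 0 (monotonicity), Y_T = Y_C almost surely on LL (exclusion), and P(LD) > 0, then (E[Y^obs·1{S^obs = L} | Z = T] − E[Y^obs·1{S^obs = L} | Z = C]) / (P(S^obs = L | Z = T) − P(S^obs = L | Z = C)) = E[Y_T | LD]. -/

import Mathlib

/-!
By independence, conditioning on `Z = T` (resp. `Z = C`) does not change the law of the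
potential outcomes, so the two arms of the estimand are the unconditional quantities
`E[Y_T 1{S_T = L}]`, `P(S_T = L)` and `E[Y_C 1{S_C = L}]`, `P(S_C = L)`. Splitting by principal
stratum, monotonicity leaves only `LL` and `LD` among the survivors of either arm, and exclusion
makes the `LL` contributions cancel, so the ratio is `E[Y_T 1_LD] / P(LD) = E[Y_T | LD]`.
-/

open MeasureTheory ProbabilityTheory

namespace ProbabilityTheory

variable {Ω β : Type*} [MeasurableSpace Ω] [MeasurableSpace β] {μ : Measure Ω}

lemma integral_cond_eq_inv_mul_setIntegral (s : Set Ω) (f : Ω → ℝ) :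
    ∫ ω, f ω ∂μ[|s] = (μ.real s)⁻¹ * ∫ ω in s, f ω ∂μ := by
  rw [cond, integral_smul_measure, ENNReal.toReal_inv, smul_eq_mul, measureReal_def]

lemma integral_cond_congr {E : Type*} [NormedAddCommGroup E] [NormedSpace ℝ E] {s : Set Ω}
    {f g : Ω → E} (hs : MeasurableSet s) (h : Set.EqOn f g s) :
    ∫ ω, f ω ∂μ[|s] = ∫ ω, g ω ∂μ[|s] :=
  integral_congr_ae <| (ae_cond_mem hs).mono fun _ hω ↦ h hω

lemma cond_congr_of_inter_eq {s t t' : Set Ω} (hs : MeasurableSet s) (h : s ∩ t = s ∩ t') :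
    μ[t | s] = μ[t' | s] := by
  rw [← cond_inter_self hs, h, cond_inter_self hs]

variable [IsFiniteMeasure μ] {Z : Ω → β} {s : Set β}

lemma IndepFun.cond_preimage_apply {γ : Type*} [MeasurableSpace γ] {X : Ω → γ} {t : Set γ}
    (hindep : IndepFun Z X μ) (hZ : Measurable Z) (hs : MeasurableSet s) (ht : MeasurableSet t)
    (hμs : μ (Z ⁻¹' s) ≠ 0) :
    μ[X ⁻¹' t | Z ⁻¹' s] = μ (X ⁻¹' t) := by
  rw [cond_apply (hZ hs), hindep.measure_inter_preimage_eq_mul s t hs ht,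
    ENNReal.inv_mul_cancel_left hμs (measure_ne_top μ _)]

lemma IndepFun.integral_cond_preimage {X : Ω → ℝ} (hindep : IndepFun Z X μ)
    (hZ : Measurable Z) (hs : MeasurableSet s) (hX : AEStronglyMeasurable X μ)
    (hμs : μ (Z ⁻¹' s) ≠ 0) :
    ∫ ω, X ω ∂μ[|Z ⁻¹' s] = ∫ ω, X ω ∂μ := by
  have hset : ∫ ω in Z ⁻¹' s, X ω ∂μ = μ.real (Z ⁻¹' s) • ∫ ω, X ω ∂μ :=
    Indep.setIntegral_eq_smul (f := id) hZ.comap_le hindep hX.aemeasurable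
      (MeasurableSpace.measurableSet_comap.2 ⟨s, hs, rfl⟩) aestronglyMeasurable_id
  rw [cond, integral_smul_measure, hset, smul_smul, ENNReal.toReal_inv, ← measureReal_def,
    inv_mul_cancel₀ ((measureReal_ne_zero_iff (measure_ne_top μ _)).2 hμs), one_smul]

end ProbabilityTheory

section PrincipalStrata

variable {Ω : Type*} [MeasurableSpace Ω] {μ : Measure Ω} {S_T S_C : Ω → Bool}

lemma measureReal_survivors_sub_eq_of_monotone [IsFiniteMeasure μ] (hSC : Measurable S_C)
    (hmono : μ {ω | S_T ω = false ∧ S_C ω = true} = 0) :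
    μ.real {ω | S_T ω = true} - μ.real {ω | S_C ω = true}
      = μ.real {ω | S_T ω = true ∧ S_C ω = false} := by
  have hC : MeasurableSet {ω | S_C ω = true} := hSC (measurableSet_singleton true)
  have hLL : μ.real ({ω | S_T ω = true} ∩ {ω | S_C ω = true})
      = μ.real {ω | S_C ω = true} := by
    refine measureReal_congr <| ae_eq_set.2 ⟨?_, measure_mono_null (fun ω hω ↦ ?_) hmono⟩
    · rw [Set.sdiff_eq_empty.2 Set.inter_subset_right, measure_empty]
    · simp_all
  have hLD : {ω | S_T ω = true} \ {ω | S_C ω = true}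
      = {ω | S_T ω = true ∧ S_C ω = false} := by
    ext ω; simp
  rw [← measureReal_inter_add_sdiff hC, hLL, hLD, add_sub_cancel_left]

lemma MeasureTheory.Integrable.bool_ite {S : Ω → Bool} {Y : Ω → ℝ} (hY : Integrable Y μ)
    (hS : Measurable S) : Integrable (fun ω ↦ if S ω then Y ω else 0) μ := by
  refine (hY.indicator (hS (measurableSet_singleton true))).congr (.of_forall fun ω ↦ ?_)
  by_cases h : S ω <;> simp [h]

lemma integral_survivors_sub_eq_setIntegral {Y_T Y_C : Ω → ℝ}
    (hST : Measurable S_T) (hSC : Measurable S_C) (hintT : Integrable Y_T μ)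
    (hintC : Integrable Y_C μ) (hmono : μ {ω | S_T ω = false ∧ S_C ω = true} = 0)
    (hexcl : ∀ᵐ ω ∂μ, S_T ω = true → S_C ω = true → Y_T ω = Y_C ω) :
    (∫ ω, (if S_T ω then Y_T ω else 0) ∂μ) - ∫ ω, (if S_C ω then Y_C ω else 0) ∂μ
      = ∫ ω in {ω | S_T ω = true ∧ S_C ω = false}, Y_T ω ∂μ := by
  have hLD : MeasurableSet {ω | S_T ω = true ∧ S_C ω = false} :=
    (hST (measurableSet_singleton true)).inter (hSC (measurableSet_singleton false))
  rw [← integral_sub (hintT.bool_ite hST) (hintC.bool_ite hSC), ← integral_indicator hLD]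
  refine integral_congr_ae ?_
  filter_upwards [hexcl, measure_eq_zero_iff_ae_notMem.1 hmono] with ω hLL hDL
  cases hT : S_T ω <;> cases hC : S_C ω <;> simp_all

end PrincipalStrata

section ObservedArms

variable {Ω : Type*} [MeasurableSpace Ω] {μ : Measure Ω} [IsFiniteMeasure μ]
  {Z S_T S_C : Ω → Bool} {Y_T Y_C : Ω → ℝ}

lemma integral_cond_observed_treated (hZ : Measurable Z)
    (hindep : IndepFun Z (fun ω ↦ (S_T ω, S_C ω, Y_T ω, Y_C ω)) μ) (hST : Measurable S_T)
    (hintT : Integrable Y_T μ) (hμ : μ (Z ⁻¹' {true}) ≠ 0) :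
    ∫ ω, (if (if Z ω then S_T ω else S_C ω) then (if Z ω then Y_T ω else Y_C ω) else 0)
      ∂μ[|Z ⁻¹' {true}] = ∫ ω, (if S_T ω then Y_T ω else 0) ∂μ :=
  (integral_cond_congr (hZ (measurableSet_singleton true)) fun ω (hω : Z ω = true) ↦ by
    simp [hω]).trans <|
    (hindep.comp (ψ := fun p : Bool × Bool × ℝ × ℝ ↦ if p.1 then p.2.2.1 else 0)
      measurable_id (.ite (measurable_fst (measurableSet_singleton true)) (by fun_prop)
        measurable_const)).integral_cond_preimage hZ (measurableSet_singleton true)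
      (hintT.bool_ite hST).1 hμ

lemma integral_cond_observed_control (hZ : Measurable Z)
    (hindep : IndepFun Z (fun ω ↦ (S_T ω, S_C ω, Y_T ω, Y_C ω)) μ) (hSC : Measurable S_C)
    (hintC : Integrable Y_C μ) (hμ : μ (Z ⁻¹' {false}) ≠ 0) :
    ∫ ω, (if (if Z ω then S_T ω else S_C ω) then (if Z ω then Y_T ω else Y_C ω) else 0)
      ∂μ[|Z ⁻¹' {false}] = ∫ ω, (if S_C ω then Y_C ω else 0) ∂μ :=
  (integral_cond_congr (hZ (measurableSet_singleton false)) fun ω (hω : Z ω = false) ↦ by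
    simp [hω]).trans <|
    (hindep.comp (ψ := fun p : Bool × Bool × ℝ × ℝ ↦ if p.2.1 then p.2.2.2 else 0)
      measurable_id (.ite (measurable_snd (measurable_fst (measurableSet_singleton true)))
        (by fun_prop) measurable_const)).integral_cond_preimage hZ
      (measurableSet_singleton false) (hintC.bool_ite hSC).1 hμ

lemma cond_observed_survival_treated (hZ : Measurable Z)
    (hindep : IndepFun Z (fun ω ↦ (S_T ω, S_C ω, Y_T ω, Y_C ω)) μ)
    (hμ : μ (Z ⁻¹' {true}) ≠ 0) :
    μ[{ω | (if Z ω then S_T ω else S_C ω) = true} | Z ⁻¹' {true}]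
      = μ {ω | S_T ω = true} :=
  (cond_congr_of_inter_eq (hZ (measurableSet_singleton true)) (t' := S_T ⁻¹' {true})
    (by ext ω; cases h : Z ω <;> simp [h])).trans <|
    (hindep.comp measurable_id measurable_fst).cond_preimage_apply hZ
      (measurableSet_singleton true) (measurableSet_singleton true) hμ

lemma cond_observed_survival_control (hZ : Measurable Z)
    (hindep : IndepFun Z (fun ω ↦ (S_T ω, S_C ω, Y_T ω, Y_C ω)) μ)
    (hμ : μ (Z ⁻¹' {false}) ≠ 0) :
    μ[{ω | (if Z ω then S_T ω else S_C ω) = true} | Z ⁻¹' {false}]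
      = μ {ω | S_C ω = true} :=
  (cond_congr_of_inter_eq (hZ (measurableSet_singleton false)) (t' := S_C ⁻¹' {true})
    (by ext ω; cases h : Z ω <;> simp [h])).trans <|
    (hindep.comp measurable_id (measurable_fst.comp measurable_snd)).cond_preimage_apply hZ
      (measurableSet_singleton false) (measurableSet_singleton true) hμ

end ObservedArms

theorem iv_estimand_equals_LD_treated_mean_general
    {Ω : Type*} [MeasurableSpace Ω] (μ : Measure Ω) [IsProbabilityMeasure μ]
    (Z S_T S_C : Ω → Bool) (Y_T Y_C : Ω → ℝ)
    (hZ : Measurable Z) (hST : Measurable S_T) (hSC : Measurable S_C)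
    (hpos : 0 < μ {ω | Z ω = true}) (hlt : μ {ω | Z ω = true} < 1)
    (hindep : IndepFun Z (fun ω => (S_T ω, S_C ω, Y_T ω, Y_C ω)) μ)
    (hintT : Integrable Y_T μ) (hintC : Integrable Y_C μ)
    (hmono : μ {ω | S_T ω = false ∧ S_C ω = true} = 0)
    (hexcl : ∀ᵐ ω ∂μ, S_T ω = true → S_C ω = true → Y_T ω = Y_C ω) :
    ((∫ ω, (if (if Z ω then S_T ω else S_C ω) then (if Z ω then Y_T ω else Y_C ω) else 0)
          ∂μ[|{ω | Z ω = true}])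
      - (∫ ω, (if (if Z ω then S_T ω else S_C ω) then (if Z ω then Y_T ω else Y_C ω) else 0)
          ∂μ[|{ω | Z ω = false}]))
    / ((μ[|{ω | Z ω = true}] {ω | (if Z ω then S_T ω else S_C ω) = true}).toReal
      - (μ[|{ω | Z ω = false}] {ω | (if Z ω then S_T ω else S_C ω) = true}).toReal)
    = ∫ ω, Y_T ω ∂μ[|{ω | S_T ω = true ∧ S_C ω = false}] := by
  have hμT : μ (Z ⁻¹' {true}) ≠ 0 := hpos.ne'
  have hμC : μ (Z ⁻¹' {false}) ≠ 0 := by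
    rw [show Z ⁻¹' {false} = (Z ⁻¹' {true})ᶜ by ext; simp,
      prob_compl_eq_one_sub (hZ (measurableSet_singleton true))]
    exact (tsub_pos_of_lt hlt).ne'
  rw [show {ω | Z ω = true} = Z ⁻¹' {true} from rfl,
    show {ω | Z ω = false} = Z ⁻¹' {false} from rfl,
    integral_cond_observed_treated hZ hindep hST hintT hμT,
    integral_cond_observed_control hZ hindep hSC hintC hμC,
    cond_observed_survival_treated hZ hindep hμT, cond_observed_survival_control hZ hindep hμC,
    ← measureReal_def, ← measureReal_def, measureReal_survivors_sub_eq_of_monotone hSC hmono,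
    integral_survivors_sub_eq_setIntegral hST hSC hintT hintC hmono hexcl,
    integral_cond_eq_inv_mul_setIntegral, div_eq_inv_mul]

/-- Under monotonicity (`P(DL) = 0`) and exclusion (`Y_T = Y_C` a.s. on `LL`), the
instrumental variables estimand, with outcomes imputed as zero for the dead, equals the
mean treated outcome in the `LD` stratum:
`(E[Y^obs·1{S^obs=L} | Z=T] − E[Y^obs·1{S^obs=L} | Z=C]) /
  (P(S^obs=L | Z=T) − P(S^obs=L | Z=C)) = E[Y_T | LD]`. -/
theorem iv_estimand_equals_LD_treated_mean
    {Ω : Type*} [MeasurableSpace Ω] (μ : Measure Ω) [IsProbabilityMeasure μ]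
    (Z S_T S_C : Ω → Bool) (Y_T Y_C : Ω → ℝ)
    (hZ : Measurable Z) (hST : Measurable S_T) (hSC : Measurable S_C)
    (hYT : Measurable Y_T) (hYC : Measurable Y_C)
    (hpos : 0 < μ {ω | Z ω = true}) (hlt : μ {ω | Z ω = true} < 1)
    (hindep : IndepFun Z (fun ω => (S_T ω, S_C ω, Y_T ω, Y_C ω)) μ)
    (hintT : Integrable Y_T μ) (hintC : Integrable Y_C μ)
    (hmono : μ {ω | S_T ω = false ∧ S_C ω = true} = 0)
    (hexcl : ∀ᵐ ω ∂μ, S_T ω = true → S_C ω = true → Y_T ω = Y_C ω)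
    (hLD : 0 < μ {ω | S_T ω = true ∧ S_C ω = false}) :
    ((∫ ω, (if (if Z ω then S_T ω else S_C ω) then (if Z ω then Y_T ω else Y_C ω) else 0)
          ∂μ[|{ω | Z ω = true}])
      - (∫ ω, (if (if Z ω then S_T ω else S_C ω) then (if Z ω then Y_T ω else Y_C ω) else 0)
          ∂μ[|{ω | Z ω = false}]))
    / ((μ[|{ω | Z ω = true}] {ω | (if Z ω then S_T ω else S_C ω) = true}).toReal
      - (μ[|{ω | Z ω = false}] {ω | (if Z ω then S_T ω else S_C ω) = true}).toReal)
    = ∫ ω, Y_T ω ∂μ[|{ω | S_T ω = true ∧ S_C ω = false}] :=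
  iv_estimand_equals_LD_treated_mean_general μ Z S_T S_C Y_T Y_C hZ hST hSC hpos hlt hindep hintT
    hintC hmono hexcl
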